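/- Let $G\in H^\infty_{m\times p}$ and $K\in H^\infty_{m\times q}$ be rational matrix functions with $T_GT_G^*-T_KT_K^*$ positive, and assume $\mathrm{rank}(T_GT_G^*-T_KT_K^*)<\infty$. Then $T_GT_G^*-T_KT_K^*=H_KH_K^*-H_GH_G^*$, and the McMillan degrees satisfy $\delta(G)\le\delta(K)$ and $\delta(K)-\delta(G)\le\mathrm{rank}(T_GT_G^*-T_KT_K^*)\le\delta(K)$. -/

import Mathlib

noncomputable section

open Complex MeasureTheory ContinuousLinearMap
open scoped Matrix

/-- A bounded operator `T` on a complex inner product space is *positive* if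
`⟨T x, x⟩ ≥ 0` (i.e. the inner product is a nonnegative real number) for all `x`. -/
def OpNonneg {H : Type*} [NormedAddCommGroup H] [InnerProductSpace ℂ H]
    (T : H →L[ℂ] H) : Prop :=
  ∀ x : H, 0 ≤ (inner ℂ (T x) x : ℂ).re ∧ (inner ℂ (T x) x : ℂ).im = 0

/-- The rank of a bounded operator: the dimension of its range. -/
def opRank {H K : Type*} [NormedAddCommGroup H] [InnerProductSpace ℂ H]
    [NormedAddCommGroup K] [InnerProductSpace ℂ K] (T : H →L[ℂ] K) : Cardinal :=
  Module.rank ℂ (LinearMap.range (T : H →ₗ[ℂ] K))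

/-- The Hilbert space `ℓ²₊(ℂᵏ)` of unilateral square-summable sequences with
values in `ℂᵏ`. -/
abbrev L2S (k : ℕ) : Type := lp (fun _ : ℕ => EuclideanSpace ℂ (Fin k)) 2

/-- The measure used for "a.e. t ∈ [0,2π]" statements on the unit circle,
parametrized by `t ↦ e^{it}`. -/
def muc : Measure ℝ := volume.restrict (Set.Ioc (0:ℝ) (2 * Real.pi))

/-- The `n`-th Fourier coefficient `Z_n = (1/2π) ∫_0^{2π} e^{-int} Z(e^{it}) dt`
of a matrix-valued function on the circle, given as `t ↦ Z(e^{it})`. -/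
def fcoef {m p : ℕ} (Z : ℝ → Matrix (Fin m) (Fin p) ℂ) (n : ℤ) :
    Matrix (Fin m) (Fin p) ℂ :=
  Matrix.of fun i j =>
    (1 / (2 * Real.pi)) * (∫ t in (0:ℝ)..(2 * Real.pi),
      Complex.exp (-Complex.I * n * t) * Z t i j)

/-- Membership in `L∞_{m×p}`: measurable and (essentially) bounded. -/
def MemLinf {m p : ℕ} (Z : ℝ → Matrix (Fin m) (Fin p) ℂ) : Prop :=
  (∀ i j, Measurable fun t => Z t i j) ∧ ∃ C : ℝ, ∀ t i j, ‖Z t i j‖ ≤ C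

/-- Membership in `H∞_{m×p}`: in `L∞` and all negatively indexed Fourier
coefficients vanish. -/
def MemHinf {m p : ℕ} (Z : ℝ → Matrix (Fin m) (Fin p) ℂ) : Prop :=
  MemLinf Z ∧ ∀ n : ℤ, n < 0 → fcoef Z n = 0

/-- `T` is the (block) Toeplitz operator of `Z`: its block matrix entries are
`(T_Z)_{i,j} = Z_{i-j}`. -/
def IsToeplitz {m p : ℕ} (Z : ℝ → Matrix (Fin m) (Fin p) ℂ)
    (T : L2S p →L[ℂ] L2S m) : Prop :=
  ∀ (i j : ℕ) (v : EuclideanSpace ℂ (Fin p)),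
    T (lp.single 2 j v) i = (fcoef Z ((i : ℤ) - (j : ℤ))).mulVec v

/-- `T` is the analytic (block) Hankel operator of `Z`: block entries
`(H_{Z,+})_{i,j} = Z_{i+j+1}`. -/
def IsHankel {m p : ℕ} (Z : ℝ → Matrix (Fin m) (Fin p) ℂ)
    (T : L2S p →L[ℂ] L2S m) : Prop :=
  ∀ (i j : ℕ) (v : EuclideanSpace ℂ (Fin p)),
    T (lp.single 2 j v) i = (fcoef Z ((i : ℤ) + (j : ℤ) + 1)).mulVec v

/-- `T` is the anti-analytic (block) Hankel operator of `Z`: block entries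
`(H_{Z,-})_{i,j} = Z_{-i-j-1}`. -/
def IsHankelAnti {m p : ℕ} (Z : ℝ → Matrix (Fin m) (Fin p) ℂ)
    (T : L2S p →L[ℂ] L2S m) : Prop :=
  ∀ (i j : ℕ) (v : EuclideanSpace ℂ (Fin p)),
    T (lp.single 2 j v) i = (fcoef Z (-(i : ℤ) - (j : ℤ) - 1)).mulVec v

/-- The value `V(z) = ∑_{n≥0} z^n V_n` of an `H∞`-function at a point `z` of the
open unit disc, computed entrywise from its Fourier (= Taylor) coefficients. -/
def evalD {m p : ℕ} (Z : ℝ → Matrix (Fin m) (Fin p) ℂ) (z : ℂ) :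
    Matrix (Fin m) (Fin p) ℂ :=
  Matrix.of fun i j => ∑' n : ℕ, z ^ n * fcoef Z (n : ℤ) i j

/-- A matrix function on the circle is rational if each entry agrees a.e. with a
quotient of polynomials in `e^{it}` whose denominator has no zeros on the circle. -/
def IsRatl {m p : ℕ} (Z : ℝ → Matrix (Fin m) (Fin p) ℂ) : Prop :=
  ∀ i j, ∃ P Q : Polynomial ℂ,
    (∀ t : ℝ, Q.eval (Complex.exp (Complex.I * t)) ≠ 0) ∧
    (∀ᵐ t ∂muc,
      Z t i j = P.eval (Complex.exp (Complex.I * t)) / Q.eval (Complex.exp (Complex.I * t)))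

/-- `S` is the forward (block) shift on `ℓ²₊(ℂᵏ)`. -/
def IsFwdShift {k : ℕ} (S : L2S k →L[ℂ] L2S k) : Prop :=
  ∀ f : L2S k, S f 0 = 0 ∧ ∀ n : ℕ, S f (n + 1) = f n

/-- `Θ` is inner: `Θ(e^{it})* Θ(e^{it}) = I` a.e. -/
def IsInnerF {r k : ℕ} (Θ : ℝ → Matrix (Fin r) (Fin k) ℂ) : Prop :=
  ∀ᵐ t ∂muc, (Θ t)ᴴ * Θ t = 1

/-- `Θ` is two-sided inner: `Θ(e^{it})* Θ(e^{it}) = I = Θ(e^{it}) Θ(e^{it})*` a.e. -/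
def IsTwoSidedInnerF {r : ℕ} (Θ : ℝ → Matrix (Fin r) (Fin r) ℂ) : Prop :=
  ∀ᵐ t ∂muc, (Θ t)ᴴ * Θ t = 1 ∧ Θ t * (Θ t)ᴴ = 1

/-- The subspace `N_Φ = closure(Im H_G + Im H_K)` of `ℓ²₊(ℂᵐ)`. -/
def NSp {m p q : ℕ} (HG : L2S p →L[ℂ] L2S m) (HK : L2S q →L[ℂ] L2S m) :
    Submodule ℂ (L2S m) :=
  (LinearMap.range (HG : L2S p →ₗ[ℂ] L2S m) ⊔
    LinearMap.range (HK : L2S q →ₗ[ℂ] L2S m)).topologicalClosure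

/-- The subspace `M_Φ = {f ∈ ℓ²₊(ℂʳ) : T_Φ* f ∈ N_Φ}`. -/
def MSp {m p q r : ℕ} (HG : L2S p →L[ℂ] L2S m) (HK : L2S q →L[ℂ] L2S m)
    (TPhi : L2S m →L[ℂ] L2S r) : Submodule ℂ (L2S r) :=
  Submodule.comap ((adjoint TPhi) : L2S r →ₗ[ℂ] L2S m) (NSp HG HK)

/-- `P` is the orthogonal projection of `H` onto `M`: selfadjoint, idempotent,
with range `M`. -/
def IsOrthProjOnto {H : Type*} [NormedAddCommGroup H] [InnerProductSpace ℂ H]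
    [CompleteSpace H] (P : H →L[ℂ] H) (M : Submodule ℂ H) : Prop :=
  P ∘L P = P ∧ IsSelfAdjoint P ∧ LinearMap.range (P : H →ₗ[ℂ] H) = M

abbrev ES {k : ℕ} (x : Fin k → ℂ) : EuclideanSpace ℂ (Fin k) := WithLp.toLp 2 x


section AuxA

local notation "⟪" x ", " y "⟫" => @inner ℂ _ _ x y

lemma my_inner_mulVec_left {a b : ℕ} (M : Matrix (Fin b) (Fin a) ℂ)
    (u : EuclideanSpace ℂ (Fin a)) (w : EuclideanSpace ℂ (Fin b)) :
    ⟪ES (M.mulVec u), w⟫ =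
      ⟪u, ES (Mᴴ.mulVec w)⟫ := by
  classical
  rw [EuclideanSpace.inner_eq_star_dotProduct, EuclideanSpace.inner_eq_star_dotProduct]
  simp only [ES, WithLp.ofLp_toLp, Matrix.mulVec, dotProduct, Matrix.conjTranspose_apply,
    Pi.star_apply, star_sum, star_mul', Finset.mul_sum, Finset.sum_mul]
  rw [Finset.sum_comm]
  refine Finset.sum_congr rfl fun i _ => Finset.sum_congr rfl fun j _ => ?_
  ring

lemma my_adjoint_single_apply {a b : ℕ} (T : L2S a →L[ℂ] L2S b)
    (M : ℕ → ℕ → Matrix (Fin b) (Fin a) ℂ)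
    (hT : ∀ (i j : ℕ) (v : EuclideanSpace ℂ (Fin a)), T (lp.single 2 j v) i = (M i j).mulVec v)
    (j l : ℕ) (w : EuclideanSpace ℂ (Fin b)) :
    (adjoint T (lp.single 2 j w)) l = ES ((M j l)ᴴ.mulVec w) := by
  have hT : ∀ (i j : ℕ) (v : EuclideanSpace ℂ (Fin a)), T (lp.single 2 j v) i = ES ((M i j).mulVec v) :=
    fun i j v => by rw [← hT]
  apply ext_inner_left ℂ
  intro u
  rw [← lp.inner_single_left l u (adjoint T (lp.single 2 j w)),
    adjoint_inner_right, lp.inner_single_right, hT]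
  exact my_inner_mulVec_left (M j l) u w

lemma my_summable_entries {a b : ℕ} (T : L2S a →L[ℂ] L2S b)
    (M : ℕ → ℕ → Matrix (Fin b) (Fin a) ℂ)
    (hT : ∀ (i j : ℕ) (v : EuclideanSpace ℂ (Fin a)), T (lp.single 2 j v) i = (M i j).mulVec v)
    (i j : ℕ) (v w : EuclideanSpace ℂ (Fin b)) :
    Summable fun l : ℕ => ⟪ES ((M j l)ᴴ.mulVec v),
      ES ((M i l)ᴴ.mulVec w)⟫ := by
  refine (lp.summable_inner (adjoint T (lp.single 2 j v)) (adjoint T (lp.single 2 i w))).congr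
    fun l => ?_
  rw [my_adjoint_single_apply T M hT, my_adjoint_single_apply T M hT]

lemma my_inner_comp_adjoint_single {a b : ℕ} (T : L2S a →L[ℂ] L2S b)
    (M : ℕ → ℕ → Matrix (Fin b) (Fin a) ℂ)
    (hT : ∀ (i j : ℕ) (v : EuclideanSpace ℂ (Fin a)), T (lp.single 2 j v) i = (M i j).mulVec v)
    (i j : ℕ) (v w : EuclideanSpace ℂ (Fin b)) :
    ⟪(T ∘L adjoint T) (lp.single 2 j v), lp.single 2 i w⟫ =
      ∑' l : ℕ, ⟪ES ((M j l)ᴴ.mulVec v),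
        ES ((M i l)ᴴ.mulVec w)⟫ := by
  have h0 : (T ∘L adjoint T) (lp.single 2 j v) = T (adjoint T (lp.single 2 j v)) := rfl
  rw [h0, ← adjoint_inner_right T, lp.inner_eq_tsum]
  exact tsum_congr fun l => by
    rw [my_adjoint_single_apply T M hT, my_adjoint_single_apply T M hT]

end AuxA


section AuxB

local notation "⟪" x ", " y "⟫" => @inner ℂ _ _ x y

open Filter Topology
open scoped ENNReal

lemma my_toeplitz_structure {a b : ℕ} (T Hk : L2S a →L[ℂ] L2S b)
    (A : ℤ → Matrix (Fin b) (Fin a) ℂ)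
    (hT : ∀ (i j : ℕ) (v : EuclideanSpace ℂ (Fin a)),
      T (lp.single 2 j v) i = (A ((i : ℤ) - (j : ℤ))).mulVec v)
    (hH : ∀ (i j : ℕ) (v : EuclideanSpace ℂ (Fin a)),
      Hk (lp.single 2 j v) i = (A ((i : ℤ) + (j : ℤ) + 1)).mulVec v)
    (i j : ℕ) (v w : EuclideanSpace ℂ (Fin b)) :
    HasSum (fun t : ℤ => ⟪ES ((A ((j : ℤ) - t))ᴴ.mulVec v), ES ((A ((i : ℤ) - t))ᴴ.mulVec w)⟫)
      (⟪(T ∘L adjoint T) (lp.single 2 j v), lp.single 2 i w⟫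
        + ⟪(Hk ∘L adjoint Hk) (lp.single 2 j v), lp.single 2 i w⟫) := by
  set f : ℕ → ℂ := fun l =>
    ⟪ES ((A ((j : ℤ) - (l : ℤ)))ᴴ.mulVec v), ES ((A ((i : ℤ) - (l : ℤ)))ᴴ.mulVec w)⟫ with hfdef
  set g : ℕ → ℂ := fun l =>
    ⟪ES ((A ((j : ℤ) + (l : ℤ) + 1))ᴴ.mulVec v), ES ((A ((i : ℤ) + (l : ℤ) + 1))ᴴ.mulVec w)⟫
    with hgdef
  have hT' : ∀ (i' j' : ℕ) (v' : EuclideanSpace ℂ (Fin a)),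
      T (lp.single 2 j' v') i' =
        ((fun i' j' : ℕ => A ((i' : ℤ) - (j' : ℤ))) i' j').mulVec v' := hT
  have hH' : ∀ (i' j' : ℕ) (v' : EuclideanSpace ℂ (Fin a)),
      Hk (lp.single 2 j' v') i' =
        ((fun i' j' : ℕ => A ((i' : ℤ) + (j' : ℤ) + 1)) i' j').mulVec v' := hH
  have Hf : HasSum f (⟪(T ∘L adjoint T) (lp.single 2 j v), lp.single 2 i w⟫) := by
    rw [my_inner_comp_adjoint_single T _ hT' i j v w]
    exact (my_summable_entries T _ hT' i j v w).hasSum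
  have Hg : HasSum g (⟪(Hk ∘L adjoint Hk) (lp.single 2 j v), lp.single 2 i w⟫) := by
    rw [my_inner_comp_adjoint_single Hk _ hH' i j v w]
    exact (my_summable_entries Hk _ hH' i j v w).hasSum
  have heq : (fun t : ℤ =>
      ⟪ES ((A ((j : ℤ) - t))ᴴ.mulVec v), ES ((A ((i : ℤ) - t))ᴴ.mulVec w)⟫) =
      (Int.rec f g : ℤ → ℂ) := by
    funext t
    cases t with
    | ofNat n => rfl
    | negSucc n =>
      show ⟪ES ((A ((j : ℤ) - Int.negSucc n))ᴴ.mulVec v),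
          ES ((A ((i : ℤ) - Int.negSucc n))ᴴ.mulVec w)⟫ = g n
      rw [show (j : ℤ) - Int.negSucc n = (j : ℤ) + (n : ℤ) + 1 by rw [Int.negSucc_eq]; ring,
        show (i : ℤ) - Int.negSucc n = (i : ℤ) + (n : ℤ) + 1 by rw [Int.negSucc_eq]; ring]
  rw [heq]
  exact Hf.int_rec Hg

lemma my_tsum_shift {a b : ℕ} (A : ℤ → Matrix (Fin b) (Fin a) ℂ) (i j : ℕ)
    (v w : EuclideanSpace ℂ (Fin b)) :
    (∑' t : ℤ, ⟪ES ((A (((j + 1 : ℕ) : ℤ) - t))ᴴ.mulVec v),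
        ES ((A (((i + 1 : ℕ) : ℤ) - t))ᴴ.mulVec w)⟫)
      = ∑' t : ℤ, ⟪ES ((A ((j : ℤ) - t))ᴴ.mulVec v), ES ((A ((i : ℤ) - t))ᴴ.mulVec w)⟫ := by
  conv_lhs => rw [← (Equiv.addRight (1 : ℤ)).tsum_eq]
  exact tsum_congr fun t => by
    rw [show ((j + 1 : ℕ) : ℤ) - ((Equiv.addRight (1 : ℤ)) t) = (j : ℤ) - t by
        simp only [Equiv.coe_addRight]; push_cast; ring,
      show ((i + 1 : ℕ) : ℤ) - ((Equiv.addRight (1 : ℤ)) t) = (i : ℤ) - t by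
        simp only [Equiv.coe_addRight]; push_cast; ring]

lemma my_tendsto_tail {f : ℕ → ℂ} (hf : Summable f) :
    Tendsto (fun n => ∑' l, f (l + n)) atTop (𝓝 0) := by
  have h : ∀ n, ∑' l, f (l + n) = (∑' l, f l) - ∑ i ∈ Finset.range n, f i := fun n =>
    eq_sub_of_add_eq' (Summable.sum_add_tsum_nat_add (f := f) n hf)
  simp only [h]
  have h2 := hf.hasSum.tendsto_sum_nat
  have h3 : Tendsto (fun n => (∑' l, f l) - ∑ i ∈ Finset.range n, f i) atTop
      (𝓝 ((∑' l, f l) - ∑' l, f l)) := tendsto_const_nhds.sub h2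
  simpa using h3

lemma my_coord_tendsto {c : ℕ} (f : L2S c) : Tendsto (fun n => ‖f n‖) atTop (𝓝 0) := by
  have h : Summable fun n => ‖f n‖ ^ (2 : ℝ≥0∞).toReal := (lp.memℓp f).summable (by norm_num)
  have h2 : Tendsto (fun n => ‖f n‖ ^ (2 : ℝ≥0∞).toReal) atTop (𝓝 0) := h.tendsto_atTop_zero
  have h3 : Tendsto (fun n => Real.sqrt (‖f n‖ ^ (2 : ℝ≥0∞).toReal)) atTop (𝓝 (Real.sqrt 0)) :=
    (Real.continuous_sqrt.tendsto 0).comp h2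
  rw [Real.sqrt_zero] at h3
  refine h3.congr fun n => ?_
  have he : ‖f n‖ ^ (2 : ℝ≥0∞).toReal = ‖f n‖ ^ (2 : ℕ) := by
    rw [show (2 : ℝ≥0∞).toReal = ((2 : ℕ) : ℝ) by norm_num, Real.rpow_natCast]
  rw [he, Real.sqrt_sq (norm_nonneg _)]

lemma my_op_eq_zero {c : ℕ} (E : L2S c →L[ℂ] L2S c) (hsa : adjoint E = E)
    (h : ∀ (i j : ℕ) (v w : EuclideanSpace ℂ (Fin c)),
      ⟪E (lp.single 2 j v), lp.single 2 i w⟫ = 0) : E = 0 := by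
  have hz : ∀ (j : ℕ) (v : EuclideanSpace ℂ (Fin c)), E (lp.single 2 j v) = 0 := by
    intro j v
    apply lp.ext
    funext i
    show (E (lp.single 2 j v)) i = (0 : L2S c) i
    have h0 : (0 : L2S c) i = 0 := rfl
    rw [h0]
    refine ext_inner_right ℂ fun w => ?_
    rw [inner_zero_left, ← lp.inner_single_right i w (E (lp.single 2 j v)), h]
  refine ContinuousLinearMap.ext fun x => ?_
  have hco : ∀ i : ℕ, (E x) i = 0 := by
    intro i
    refine ext_inner_left ℂ fun w => ?_
    rw [inner_zero_right, ← lp.inner_single_left i w (E x), ← adjoint_inner_left, hsa, hz,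
      inner_zero_left]
  apply lp.ext
  funext i
  show (E x) i = (0 : L2S c) i
  rw [hco i]; rfl

end AuxB


section AuxC
local notation "⟪" x ", " y "⟫" => @inner ℂ _ _ x y
open Filter Topology

lemma my_norm_single {c : ℕ} (n : ℕ) (v : EuclideanSpace ℂ (Fin c)) :
    ‖(lp.single 2 n v : L2S c)‖ = ‖v‖ := lp.norm_single (E := fun _ : ℕ => EuclideanSpace ℂ (Fin c)) (by norm_num) n v

set_option maxHeartbeats 800000 in
lemma my_finrank_tendsto {c d : ℕ} (D : L2S d →L[ℂ] L2S c)
    (hfin : Module.rank ℂ (LinearMap.range (D : L2S d →ₗ[ℂ] L2S c)) < Cardinal.aleph0)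
    (i j : ℕ) (v : EuclideanSpace ℂ (Fin d)) (w : EuclideanSpace ℂ (Fin c)) :
    Tendsto (fun n => ⟪D (lp.single 2 (j + n) v), lp.single 2 (i + n) w⟫) atTop (𝓝 0) := by
  classical
  set W := LinearMap.range (D : L2S d →ₗ[ℂ] L2S c) with hWdef
  haveI hfree : Module.Free ℂ W := Module.Free.of_divisionRing ℂ W
  haveI hW : Module.Finite ℂ W := Module.rank_lt_aleph0_iff.mp hfin
  set r := Module.finrank ℂ W with hr
  let b : OrthonormalBasis (Fin r) ℂ W := stdOrthonormalBasis ℂ W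
  have hbn : ∀ k, ‖(b k : L2S c)‖ = 1 := fun k => by
    rw [← Submodule.coe_norm]; exact b.orthonormal.1 k
  set y : ℕ → W := fun n => ⟨D (lp.single 2 (j + n) v), LinearMap.mem_range_self _ _⟩ with hy
  have hyc : ∀ n, (y n : L2S c) = D (lp.single 2 (j + n) v) := fun n => rfl
  have hrep : ∀ n, ⟪D (lp.single 2 (j + n) v), lp.single 2 (i + n) w⟫
      = ∑ k : Fin r, (starRingEnd ℂ) (⟪(b k : L2S c), (y n : L2S c)⟫) *
          ⟪(b k : L2S c), lp.single 2 (i + n) w⟫ := by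
    intro n
    have h0 := congrArg (Subtype.val) (b.sum_repr' (y n))
    rw [hyc n] at h0
    have h1 : D (lp.single 2 (j + n) v)
        = ∑ k : Fin r, ⟪(b k : L2S c), (y n : L2S c)⟫ • (b k : L2S c) := by
      rw [← h0]
      push_cast
      refine Finset.sum_congr rfl fun k _ => ?_
      congr 1
    rw [h1, sum_inner]
    exact Finset.sum_congr rfl fun k _ => inner_smul_left _ _ _
  have hynorm : ∀ n, ‖(y n : L2S c)‖ ≤ ‖D‖ * ‖v‖ := by
    intro n
    rw [hyc n]
    refine (D.le_opNorm _).trans ?_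
    rw [my_norm_single]
  have main : Tendsto (fun n => ∑ k : Fin r, (starRingEnd ℂ) (⟪(b k : L2S c), (y n : L2S c)⟫) *
      ⟪(b k : L2S c), lp.single 2 (i + n) w⟫) atTop (𝓝 0) := by
    rw [show (0 : ℂ) = ∑ _k : Fin r, 0 by simp]
    refine tendsto_finset_sum _ fun k _ => ?_
    have hcoord : Tendsto (fun n => ‖(b k : L2S c) (i + n)‖) atTop (𝓝 0) := by
      refine ((my_coord_tendsto ((b k : L2S c))).comp (tendsto_add_atTop_nat i)).congr fun n => ?_
      simp [add_comm]
    have hg : Tendsto (fun n => (‖D‖ * ‖v‖) * (‖(b k : L2S c) (i + n)‖ * ‖w‖))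
        atTop (𝓝 0) := by
      have h5 := (hcoord.mul_const ‖w‖).const_mul (‖D‖ * ‖v‖)
      simpa using h5
    refine squeeze_zero_norm (fun n => ?_) hg
    rw [norm_mul, RCLike.norm_conj]
    have hb1 : ‖⟪(b k : L2S c), (y n : L2S c)⟫‖ ≤ ‖D‖ * ‖v‖ := by
      refine (norm_inner_le_norm _ _).trans ?_
      rw [hbn k, one_mul]
      exact hynorm n
    have hb2 : ‖⟪(b k : L2S c), lp.single 2 (i + n) w⟫‖ ≤ ‖(b k : L2S c) (i + n)‖ * ‖w‖ := by
      rw [lp.inner_single_right]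
      exact norm_inner_le_norm _ _
    exact mul_le_mul hb1 hb2 (norm_nonneg _) (by positivity)
  exact main.congr fun n => (hrep n).symm
end AuxC

section AuxD
local notation "⟪" x ", " y "⟫" => @inner ℂ _ _ x y
variable {E F : Type} [NormedAddCommGroup E] [InnerProductSpace ℂ E] [CompleteSpace E]
  [NormedAddCommGroup F] [InnerProductSpace ℂ F] [CompleteSpace F]

lemma my_range_le_orth (A : E →L[ℂ] F) :
    LinearMap.range (A : E →ₗ[ℂ] F) ≤
      (LinearMap.ker ((adjoint A : F →L[ℂ] E) : F →ₗ[ℂ] E))ᗮ := by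
  rintro _ ⟨u, rfl⟩
  rw [Submodule.mem_orthogonal]
  intro y hy
  have hy' : adjoint A y = 0 := hy
  show ⟪y, A u⟫ = 0
  rw [← adjoint_inner_left, hy', inner_zero_left]

lemma my_orth_le_closure (A : E →L[ℂ] F) :
    (LinearMap.ker ((adjoint A : F →L[ℂ] E) : F →ₗ[ℂ] E))ᗮ ≤
      (LinearMap.range (A : E →ₗ[ℂ] F)).topologicalClosure := by
  have h1 : (LinearMap.range (A : E →ₗ[ℂ] F))ᗮ ≤
      LinearMap.ker ((adjoint A : F →L[ℂ] E) : F →ₗ[ℂ] E) := by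
    intro y hy
    show adjoint A y = 0
    refine ext_inner_right ℂ fun u => ?_
    rw [inner_zero_left, adjoint_inner_left]
    have h2 : ⟪(A u : F), y⟫ = 0 := hy _ (LinearMap.mem_range_self (A : E →ₗ[ℂ] F) u)
    rw [← inner_conj_symm, h2, map_zero]
  calc (LinearMap.ker ((adjoint A : F →L[ℂ] E) : F →ₗ[ℂ] E))ᗮ
      ≤ ((LinearMap.range (A : E →ₗ[ℂ] F))ᗮ)ᗮ := Submodule.orthogonal_le h1
  _ = (LinearMap.range (A : E →ₗ[ℂ] F)).topologicalClosure :=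
      Submodule.orthogonal_orthogonal_eq_closure _

end AuxD

section AuxE
local notation "⟪" x ", " y "⟫" => @inner ℂ _ _ x y

lemma my_orthonormal_continuum {E : Type} [NormedAddCommGroup E] [InnerProductSpace ℂ E]
    [CompleteSpace E] (e : ℕ → E) (he : Orthonormal ℂ e) :
    Cardinal.continuum ≤ Module.rank ℂ E := by
  classical
  set x : Set.Ioo (0:ℝ) 1 → E := fun t => ∑' n : ℕ, (((t : ℝ) : ℂ) ^ n) • e n with hx
  have hnorm : ∀ (t : Set.Ioo (0:ℝ) 1) (n : ℕ),
      ‖(((t : ℝ) : ℂ) ^ n) • e n‖ = (t : ℝ) ^ n := by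
    intro t n
    rw [norm_smul, he.1 n, mul_one, norm_pow]
    congr 1
    rw [Complex.norm_real, Real.norm_eq_abs, abs_of_pos t.2.1]
  have hsum : ∀ t : Set.Ioo (0:ℝ) 1, Summable fun n : ℕ => (((t : ℝ) : ℂ) ^ n) • e n := by
    intro t
    apply Summable.of_norm
    simp only [hnorm t]
    exact summable_geometric_of_lt_one (le_of_lt t.2.1) t.2.2
  have hinner : ∀ (m : ℕ) (t : Set.Ioo (0:ℝ) 1), ⟪e m, x t⟫ = ((t : ℝ) : ℂ) ^ m := by
    intro m t
    rw [hx]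
    have h1 : ⟪e m, ∑' n : ℕ, (((t : ℝ) : ℂ) ^ n) • e n⟫
        = ∑' n : ℕ, ⟪e m, (((t : ℝ) : ℂ) ^ n) • e n⟫ :=
      ContinuousLinearMap.map_tsum (innerSL ℂ (e m)) (hsum t)
    rw [h1]
    rw [tsum_eq_single m ?_]
    · rw [inner_smul_right, orthonormal_iff_ite.mp he, if_pos rfl, mul_one]
    · intro n hn
      rw [inner_smul_right, orthonormal_iff_ite.mp he, if_neg (fun h => hn (by rw [h])), mul_zero]
  have hli : LinearIndependent ℂ x := by
    rw [linearIndependent_iff']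
    intro s g hrel i0 hi0
    set v : Set.Ioo (0:ℝ) 1 → ℂ := fun i => ((i : ℝ) : ℂ) with hv
    have hmom : ∀ m : ℕ, ∑ i ∈ s, g i * (v i) ^ m = 0 := by
      intro m
      have h0 : ⟪e m, (0 : E)⟫ = 0 := inner_zero_right _
      rw [← hrel] at h0
      rw [← h0, inner_sum]
      refine Finset.sum_congr rfl fun i _ => ?_
      rw [inner_smul_right, hinner m i]
    have hinj : Set.InjOn v ↑s := by
      intro a _ b _ hab
      apply Subtype.ext
      simp only [hv] at hab
      exact_mod_cast hab
    set P := Lagrange.basis s v i0 with hP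
    have key : ∑ i ∈ s, g i * P.eval (v i) = g i0 := by
      rw [Finset.sum_eq_single i0
        (fun i hi hne => by rw [hP, Lagrange.eval_basis_of_ne hne.symm hi, mul_zero])
        (fun h => absurd hi0 h)]
      rw [hP, Lagrange.eval_basis_self hinj hi0, mul_one]
    have other : ∑ i ∈ s, g i * P.eval (v i) = 0 := by
      calc ∑ i ∈ s, g i * P.eval (v i)
          = ∑ i ∈ s, ∑ n ∈ Finset.range (P.natDegree + 1), P.coeff n * (g i * (v i) ^ n) := by
            refine Finset.sum_congr rfl fun i _ => ?_
            rw [Polynomial.eval_eq_sum_range, Finset.mul_sum]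
            exact Finset.sum_congr rfl fun n _ => by ring
      _ = ∑ n ∈ Finset.range (P.natDegree + 1), P.coeff n * ∑ i ∈ s, g i * (v i) ^ n := by
            rw [Finset.sum_comm]
            exact Finset.sum_congr rfl fun n _ => by rw [Finset.mul_sum]
      _ = 0 := by
            refine Finset.sum_eq_zero fun n _ => ?_
            rw [hmom n, mul_zero]
    rw [key] at other
    exact other
  have hcard := hli.cardinal_le_rank
  rwa [Cardinal.mk_Ioo_real (by norm_num : (0:ℝ) < 1)] at hcard

end AuxE
section AuxE2
open Cardinal
local notation "⟪" x ", " y "⟫" => @inner ℂ _ _ x y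

set_option maxHeartbeats 1000000 in
set_option synthInstance.maxHeartbeats 400000 in
lemma my_rank_L2S_le (b : ℕ) : Module.rank ℂ (L2S b) ≤ Cardinal.continuum := by
  refine (rank_le_card ℂ (L2S b)).trans ?_
  have h1 : #(L2S b) ≤ #(∀ _ : ℕ, EuclideanSpace ℂ (Fin b)) :=
    Cardinal.mk_le_of_injective (f := fun f : L2S b => (f : ∀ _ : ℕ, EuclideanSpace ℂ (Fin b)))
      (fun f g h => lp.ext h)
  refine h1.trans ?_
  have h2 : #(∀ _ : ℕ, EuclideanSpace ℂ (Fin b))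
      = #(EuclideanSpace ℂ (Fin b)) ^ Cardinal.aleph0 := by
    rw [← Cardinal.mk_nat]
    exact (Cardinal.power_def _ _).symm
  have h3 : #(EuclideanSpace ℂ (Fin b)) ≤ Cardinal.continuum := by
    have h4 : #(EuclideanSpace ℂ (Fin b)) = #ℂ ^ (b : Cardinal) := by
      have h5 : #(EuclideanSpace ℂ (Fin b)) = #(Fin b → ℂ) := Cardinal.mk_congr (WithLp.equiv 2 _)
      rw [h5, ← Cardinal.mk_fin b]
      exact (Cardinal.power_def _ _).symm
    rw [h4, mk_complex]
    calc Cardinal.continuum ^ (b : Cardinal) ≤ Cardinal.continuum ^ Cardinal.aleph0 :=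
      Cardinal.power_le_power_left Cardinal.continuum_ne_zero (Cardinal.nat_lt_aleph0 b).le
    _ = Cardinal.continuum := by
        rw [← Cardinal.two_power_aleph0, ← Cardinal.power_mul, Cardinal.aleph0_mul_aleph0]
  rw [h2]
  calc #(EuclideanSpace ℂ (Fin b)) ^ Cardinal.aleph0
      ≤ Cardinal.continuum ^ Cardinal.aleph0 := Cardinal.power_le_power_right h3
  _ = Cardinal.continuum := by
      rw [← Cardinal.two_power_aleph0, ← Cardinal.power_mul, Cardinal.aleph0_mul_aleph0]

set_option maxHeartbeats 1000000 in
set_option synthInstance.maxHeartbeats 400000 in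
lemma my_continuum_le_opRank {a b : ℕ} (A : L2S a →L[ℂ] L2S b)
    (h : ¬ Module.rank ℂ (LinearMap.range (A : L2S a →ₗ[ℂ] L2S b)) < Cardinal.aleph0) :
    Cardinal.continuum ≤ Module.rank ℂ (LinearMap.range (A : L2S a →ₗ[ℂ] L2S b)) := by
  classical
  set R := LinearMap.range (A : L2S a →ₗ[ℂ] L2S b) with hR
  set Kr := LinearMap.ker (A : L2S a →ₗ[ℂ] L2S b) with hKr
  have hclosed : IsClosed (Kr : Set (L2S a)) := by
    have h6 : (Kr : Set (L2S a)) = A ⁻¹' {0} := by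
      ext z
      simp [hKr, LinearMap.mem_ker]
    rw [h6]
    exact isClosed_singleton.preimage A.continuous
  haveI : CompleteSpace Kr := hclosed.completeSpace_coe
  set W := Krᗮ with hW
  haveI : CompleteSpace W := Kr.isClosed_orthogonal.completeSpace_coe
  set L : W →ₗ[ℂ] R := LinearMap.codRestrict R ((A : L2S a →ₗ[ℂ] L2S b).comp W.subtype)
    (fun w => LinearMap.mem_range_self _ _) with hL
  have hinj : Function.Injective L := by
    intro z1 z2 hz
    have h7 : ∀ z : W, L z = 0 → z = 0 := by
      intro z hz0
      have h8 : A (z : L2S a) = 0 := congrArg Subtype.val hz0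
      have h9 : (z : L2S a) ∈ Kr := h8
      have h10 : ⟪(z : L2S a), (z : L2S a)⟫ = 0 := z.2 _ h9
      have h11 : (z : L2S a) = 0 := inner_self_eq_zero.mp h10
      exact Subtype.ext h11
    have h12 : L (z1 - z2) = 0 := by rw [map_sub, hz, sub_self]
    have := h7 _ h12
    rwa [sub_eq_zero] at this
  have hsurj : Function.Surjective L := by
    rintro ⟨x, hx⟩
    obtain ⟨u, hu⟩ := hx
    set z := u - (Submodule.orthogonalProjection Kr u : L2S a) with hzdef
    have hzW : z ∈ W := Kr.sub_starProjection_mem_orthogonal u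
    refine ⟨⟨z, hzW⟩, ?_⟩
    apply Subtype.ext
    show A z = x
    have hker0 : A ((Submodule.orthogonalProjection Kr u : L2S a)) = 0 := (Submodule.orthogonalProjection Kr u).2
    rw [hzdef, map_sub, hker0, sub_zero]
    exact hu
  have hequiv : Module.rank ℂ W = Module.rank ℂ R :=
    (LinearEquiv.ofBijective L ⟨hinj, hsurj⟩).rank_eq
  rw [← hequiv] at h ⊢
  obtain ⟨s, b', hb'⟩ := exists_hilbertBasis ℂ W
  have hsinf : s.Infinite := by
    by_contra hfin
    rw [Set.not_infinite] at hfin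
    have hdense := b'.dense_span
    rw [hb'] at hdense
    rw [Subtype.range_coe] at hdense
    haveI : FiniteDimensional ℂ (Submodule.span ℂ s) := FiniteDimensional.span_of_finite ℂ hfin
    have hcl : (Submodule.span ℂ s).topologicalClosure = Submodule.span ℂ s :=
      IsClosed.submodule_topologicalClosure_eq (Submodule.closed_of_finiteDimensional _)
    rw [hcl] at hdense
    apply h
    have h13 : Module.rank ℂ W = Module.rank ℂ (⊤ : Submodule ℂ W) := (rank_top ℂ W).symm
    rw [h13, ← hdense]
    exact lt_of_le_of_lt (rank_span_le s) hfin.lt_aleph0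
  haveI := hsinf.to_subtype
  set e : ℕ → W := fun n => ((Infinite.natEmbedding s) n : W) with he'
  have he : Orthonormal ℂ e := by
    have hON : Orthonormal ℂ ((↑) : s → W) := by rw [← hb']; exact b'.orthonormal
    exact hON.comp _ (Infinite.natEmbedding s).injective
  exact my_orthonormal_continuum e he

end AuxE2

section Main

local notation "⟪" x ", " y "⟫" => @inner ℂ _ _ x y

open Filter

set_option maxHeartbeats 2000000 in
set_option synthInstance.maxHeartbeats 1000000 in
theorem finite_rank_consequences'
    {m p q : ℕ}
    (G : ℝ → Matrix (Fin m) (Fin p) ℂ) (K : ℝ → Matrix (Fin m) (Fin q) ℂ)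
    (TG : L2S p →L[ℂ] L2S m) (TK : L2S q →L[ℂ] L2S m)
    (hTG : ∀ (i j : ℕ) (v : EuclideanSpace ℂ (Fin p)),
      TG (lp.single 2 j v) i = (fcoef G ((i : ℤ) - (j : ℤ))).mulVec v)
    (hTK : ∀ (i j : ℕ) (v : EuclideanSpace ℂ (Fin q)),
      TK (lp.single 2 j v) i = (fcoef K ((i : ℤ) - (j : ℤ))).mulVec v)
    (HG : L2S p →L[ℂ] L2S m) (HK : L2S q →L[ℂ] L2S m)
    (hHG : ∀ (i j : ℕ) (v : EuclideanSpace ℂ (Fin p)),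
      HG (lp.single 2 j v) i = (fcoef G ((i : ℤ) + (j : ℤ) + 1)).mulVec v)
    (hHK : ∀ (i j : ℕ) (v : EuclideanSpace ℂ (Fin q)),
      HK (lp.single 2 j v) i = (fcoef K ((i : ℤ) + (j : ℤ) + 1)).mulVec v)
    (hpos : OpNonneg (TG ∘L adjoint TG - TK ∘L adjoint TK))
    (hfin : opRank (TG ∘L adjoint TG - TK ∘L adjoint TK) < Cardinal.aleph0) :
    TG ∘L adjoint TG - TK ∘L adjoint TK = HK ∘L adjoint HK - HG ∘L adjoint HG ∧
      opRank HG ≤ opRank HK ∧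
      opRank HK ≤ opRank (TG ∘L adjoint TG - TK ∘L adjoint TK) + opRank HG ∧
      opRank (TG ∘L adjoint TG - TK ∘L adjoint TK) ≤ opRank HK := by
  classical
  set D := TG ∘L adjoint TG - TK ∘L adjoint TK with hDdef
  set F := HK ∘L adjoint HK - HG ∘L adjoint HG with hFdef
  -- self-adjointness
  have hsaD : adjoint D = D := by
    rw [hDdef]
    simp only [map_sub, adjoint_comp, adjoint_adjoint]
  have hsaF : adjoint F = F := by
    rw [hFdef]
    simp only [map_sub, adjoint_comp, adjoint_adjoint]
  -- entries of D - F as difference of two ℤ-sums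
  have hGsum := my_toeplitz_structure TG HG (fcoef G) hTG hHG
  have hKsum := my_toeplitz_structure TK HK (fcoef K) hTK hHK
  have hentry : ∀ (i j : ℕ) (v w : EuclideanSpace ℂ (Fin m)),
      ⟪(D - F) (lp.single 2 j v), lp.single 2 i w⟫
        = (∑' t : ℤ, ⟪ES ((fcoef G ((j : ℤ) - t))ᴴ.mulVec v),
              ES ((fcoef G ((i : ℤ) - t))ᴴ.mulVec w)⟫)
          - ∑' t : ℤ, ⟪ES ((fcoef K ((j : ℤ) - t))ᴴ.mulVec v),
              ES ((fcoef K ((i : ℤ) - t))ᴴ.mulVec w)⟫ := by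
    intro i j v w
    rw [(hGsum i j v w).tsum_eq, (hKsum i j v w).tsum_eq]
    simp only [hDdef, hFdef, ContinuousLinearMap.sub_apply, inner_sub_left]
    ring
  have hshift : ∀ (i j : ℕ) (v w : EuclideanSpace ℂ (Fin m)),
      ⟪(D - F) (lp.single 2 (j + 1) v), lp.single 2 (i + 1) w⟫
        = ⟪(D - F) (lp.single 2 j v), lp.single 2 i w⟫ := by
    intro i j v w
    rw [hentry (i + 1) (j + 1) v w, hentry i j v w,
      my_tsum_shift (fcoef G) i j v w, my_tsum_shift (fcoef K) i j v w]
  have hiter : ∀ (n i j : ℕ) (v w : EuclideanSpace ℂ (Fin m)),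
      ⟪(D - F) (lp.single 2 j v), lp.single 2 i w⟫
        = ⟪(D - F) (lp.single 2 (j + n) v), lp.single 2 (i + n) w⟫ := by
    intro n
    induction n with
    | zero => intro i j v w; rfl
    | succ n ih =>
      intro i j v w
      rw [ih i j v w, show j + (n + 1) = (j + n) + 1 from rfl,
        show i + (n + 1) = (i + n) + 1 from rfl, hshift]
  have hlim : ∀ (i j : ℕ) (v w : EuclideanSpace ℂ (Fin m)),
      Tendsto (fun n => ⟪(D - F) (lp.single 2 (j + n) v), lp.single 2 (i + n) w⟫)
        atTop (nhds 0) := by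
    intro i j v w
    have hDlim := my_finrank_tendsto D hfin i j v w
    have hGlim : Tendsto (fun n =>
        ⟪(HG ∘L adjoint HG) (lp.single 2 (j + n) v), lp.single 2 (i + n) w⟫)
        atTop (nhds 0) := by
      have hsumG := my_summable_entries HG
        (fun i' j' : ℕ => fcoef G ((i' : ℤ) + (j' : ℤ) + 1)) hHG i j v w
      refine (my_tendsto_tail hsumG).congr fun n => ?_
      rw [my_inner_comp_adjoint_single HG
        (fun i' j' : ℕ => fcoef G ((i' : ℤ) + (j' : ℤ) + 1)) hHG (i + n) (j + n) v w]
      exact tsum_congr fun l => by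
        rw [show ((j : ℤ) + ((l + n : ℕ) : ℤ) + 1) = (((j + n : ℕ) : ℤ)) + (l : ℤ) + 1 by
            push_cast; ring,
          show ((i : ℤ) + ((l + n : ℕ) : ℤ) + 1) = (((i + n : ℕ) : ℤ)) + (l : ℤ) + 1 by
            push_cast; ring]
    have hKlim : Tendsto (fun n =>
        ⟪(HK ∘L adjoint HK) (lp.single 2 (j + n) v), lp.single 2 (i + n) w⟫)
        atTop (nhds 0) := by
      have hsumK := my_summable_entries HK
        (fun i' j' : ℕ => fcoef K ((i' : ℤ) + (j' : ℤ) + 1)) hHK i j v w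
      refine (my_tendsto_tail hsumK).congr fun n => ?_
      rw [my_inner_comp_adjoint_single HK
        (fun i' j' : ℕ => fcoef K ((i' : ℤ) + (j' : ℤ) + 1)) hHK (i + n) (j + n) v w]
      exact tsum_congr fun l => by
        rw [show ((j : ℤ) + ((l + n : ℕ) : ℤ) + 1) = (((j + n : ℕ) : ℤ)) + (l : ℤ) + 1 by
            push_cast; ring,
          show ((i : ℤ) + ((l + n : ℕ) : ℤ) + 1) = (((i + n : ℕ) : ℤ)) + (l : ℤ) + 1 by
            push_cast; ring]
    have hsplit : (fun n => ⟪(D - F) (lp.single 2 (j + n) v), lp.single 2 (i + n) w⟫)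
        = fun n => ⟪D (lp.single 2 (j + n) v), lp.single 2 (i + n) w⟫
            + ⟪(HG ∘L adjoint HG) (lp.single 2 (j + n) v), lp.single 2 (i + n) w⟫
            - ⟪(HK ∘L adjoint HK) (lp.single 2 (j + n) v), lp.single 2 (i + n) w⟫ := by
      funext n
      simp only [hFdef, ContinuousLinearMap.sub_apply, inner_sub_left]
      ring
    rw [hsplit]
    simpa using (hDlim.add hGlim).sub hKlim
  have hzero : ∀ (i j : ℕ) (v w : EuclideanSpace ℂ (Fin m)),
      ⟪(D - F) (lp.single 2 j v), lp.single 2 i w⟫ = 0 := by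
    intro i j v w
    have h2 : Tendsto (fun _ : ℕ => ⟪(D - F) (lp.single 2 j v), lp.single 2 i w⟫)
        atTop (nhds (⟪(D - F) (lp.single 2 j v), lp.single 2 i w⟫)) := tendsto_const_nhds
    have h3 : (fun _ : ℕ => ⟪(D - F) (lp.single 2 j v), lp.single 2 i w⟫)
        = fun n => ⟪(D - F) (lp.single 2 (j + n) v), lp.single 2 (i + n) w⟫ :=
      funext fun n => hiter n i j v w
    rw [h3] at h2
    exact tendsto_nhds_unique h2 (hlim i j v w)
  have hsaE : adjoint (D - F) = D - F := by rw [map_sub, hsaD, hsaF]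
  have hmain : D = F := sub_eq_zero.mp (my_op_eq_zero (D - F) hsaE hzero)
  -- kernel lemmas
  have hker1 : ∀ x : L2S m, adjoint HK x = 0 → adjoint HG x = 0 ∧ D x = 0 := by
    intro x hx
    have hx2 : ⟪D x, x⟫ = - ⟪adjoint HG x, adjoint HG x⟫ := by
      rw [hmain, hFdef, ContinuousLinearMap.sub_apply, inner_sub_left,
        ContinuousLinearMap.comp_apply, ContinuousLinearMap.comp_apply,
        ← adjoint_inner_right HK, ← adjoint_inner_right HG, hx, inner_zero_left, zero_sub]
    have hre := (hpos x).1
    rw [hx2] at hre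
    have hre2 : 0 ≤ -(‖adjoint HG x‖ ^ 2) := by
      have h7 : (-(⟪adjoint HG x, adjoint HG x⟫)).re = -(‖adjoint HG x‖ ^ 2) := by
        rw [Complex.neg_re, ← RCLike.re_to_complex, inner_self_eq_norm_sq]
      rwa [h7] at hre
    have hG0 : adjoint HG x = 0 := by
      have h4 : ‖adjoint HG x‖ ^ 2 ≤ 0 := by linarith
      have h5 : ‖adjoint HG x‖ ^ 2 = 0 := le_antisymm h4 (by positivity)
      have h6 : ‖adjoint HG x‖ = 0 := by
        have := pow_eq_zero_iff (n := 2) (by norm_num) |>.mp h5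
        exact this
      exact norm_eq_zero.mp h6
    refine ⟨hG0, ?_⟩
    rw [hmain, hFdef]
    simp only [ContinuousLinearMap.sub_apply, ContinuousLinearMap.comp_apply, hx, hG0, map_zero,
      sub_zero, sub_self]
  have hker2 : ∀ x : L2S m, D x = 0 → adjoint HG x = 0 → adjoint HK x = 0 := by
    intro x hDx hGx
    have h2 : ⟪D x, x⟫ = 0 := by rw [hDx, inner_zero_left]
    rw [hmain, hFdef, ContinuousLinearMap.sub_apply, inner_sub_left,
      ContinuousLinearMap.comp_apply, ContinuousLinearMap.comp_apply,
      ← adjoint_inner_right HK, ← adjoint_inner_right HG, hGx, inner_zero_left, sub_zero] at h2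
    exact inner_self_eq_zero.mp h2
  refine ⟨hmain, ?_, ?_, ?_⟩
  · -- opRank HG ≤ opRank HK
    by_cases hfinK : opRank HK < Cardinal.aleph0
    · haveI hfree : Module.Free ℂ (LinearMap.range (HK : L2S q →ₗ[ℂ] L2S m)) :=
        Module.Free.of_divisionRing _ _
      haveI : Module.Finite ℂ (LinearMap.range (HK : L2S q →ₗ[ℂ] L2S m)) :=
        Module.rank_lt_aleph0_iff.mp hfinK
      have hcl : (LinearMap.range (HK : L2S q →ₗ[ℂ] L2S m)).topologicalClosure
          = LinearMap.range (HK : L2S q →ₗ[ℂ] L2S m) :=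
        IsClosed.submodule_topologicalClosure_eq (Submodule.closed_of_finiteDimensional _)
      have hsub : LinearMap.range (HG : L2S p →ₗ[ℂ] L2S m)
          ≤ LinearMap.range (HK : L2S q →ₗ[ℂ] L2S m) := by
        refine le_trans ?_ (le_trans (my_orth_le_closure HK) hcl.le)
        rintro _ ⟨u, rfl⟩
        rw [Submodule.mem_orthogonal]
        intro y hy
        have hy0 : adjoint HK y = 0 := hy
        have hG0 : adjoint HG y = 0 := (hker1 y hy0).1
        show ⟪y, HG u⟫ = 0
        rw [← adjoint_inner_left, hG0, inner_zero_left]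
      exact Submodule.rank_mono hsub
    · exact le_trans (le_trans (Submodule.rank_le _) (my_rank_L2S_le m))
        (my_continuum_le_opRank HK hfinK)
  · -- opRank HK ≤ opRank D + opRank HG
    by_cases hfinG : opRank HG < Cardinal.aleph0
    · have hsup : Module.rank ℂ
          ((LinearMap.range (D : L2S m →ₗ[ℂ] L2S m)
            ⊔ LinearMap.range (HG : L2S p →ₗ[ℂ] L2S m)) : Submodule ℂ (L2S m))
          < Cardinal.aleph0 :=
        lt_of_le_of_lt (Submodule.rank_add_le_rank_add_rank _ _)
          (Cardinal.add_lt_aleph0 hfin hfinG)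
      haveI hfree2 : Module.Free ℂ
          ((LinearMap.range (D : L2S m →ₗ[ℂ] L2S m)
            ⊔ LinearMap.range (HG : L2S p →ₗ[ℂ] L2S m)) : Submodule ℂ (L2S m)) :=
        Module.Free.of_divisionRing _ _
      haveI : Module.Finite ℂ
          ((LinearMap.range (D : L2S m →ₗ[ℂ] L2S m)
            ⊔ LinearMap.range (HG : L2S p →ₗ[ℂ] L2S m)) : Submodule ℂ (L2S m)) :=
        Module.rank_lt_aleph0_iff.mp hsup
      have hcl : ((LinearMap.range (D : L2S m →ₗ[ℂ] L2S m)
            ⊔ LinearMap.range (HG : L2S p →ₗ[ℂ] L2S m)) : Submodule ℂ (L2S m)).topologicalClosure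
          = (LinearMap.range (D : L2S m →ₗ[ℂ] L2S m)
            ⊔ LinearMap.range (HG : L2S p →ₗ[ℂ] L2S m)) :=
        IsClosed.submodule_topologicalClosure_eq (Submodule.closed_of_finiteDimensional _)
      have hsub : LinearMap.range (HK : L2S q →ₗ[ℂ] L2S m)
          ≤ LinearMap.range (D : L2S m →ₗ[ℂ] L2S m)
            ⊔ LinearMap.range (HG : L2S p →ₗ[ℂ] L2S m) := by
        rw [← hcl, ← Submodule.orthogonal_orthogonal_eq_closure]
        rintro _ ⟨u, rfl⟩
        rw [Submodule.mem_orthogonal]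
        intro y hy
        have hyD : y ∈ (LinearMap.range (D : L2S m →ₗ[ℂ] L2S m))ᗮ :=
          Submodule.orthogonal_le le_sup_left hy
        have hyG : y ∈ (LinearMap.range (HG : L2S p →ₗ[ℂ] L2S m))ᗮ :=
          Submodule.orthogonal_le le_sup_right hy
        have hD0 : D y = 0 := by
          refine ext_inner_left ℂ fun z => ?_
          rw [inner_zero_right, ← adjoint_inner_left, hsaD]
          exact hyD _ (LinearMap.mem_range_self (D : L2S m →ₗ[ℂ] L2S m) z)
        have hG0 : adjoint HG y = 0 := by
          refine ext_inner_right ℂ fun z => ?_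
          rw [inner_zero_left, adjoint_inner_left, ← inner_conj_symm]
          have h8 : ⟪HG z, y⟫ = (0 : ℂ) := hyG (HG z) ⟨z, rfl⟩
          rw [h8, map_zero]
        have hK0 : adjoint HK y = 0 := hker2 y hD0 hG0
        show ⟪y, HK u⟫ = 0
        rw [← adjoint_inner_left, hK0, inner_zero_left]
      exact le_trans (Submodule.rank_mono hsub) (Submodule.rank_add_le_rank_add_rank _ _)
    · refine le_trans (le_trans (Submodule.rank_le _) (my_rank_L2S_le m)) ?_
      exact le_trans (my_continuum_le_opRank HG hfinG) (self_le_add_left _ _)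
  · -- opRank D ≤ opRank HK
    by_cases hfinK : opRank HK < Cardinal.aleph0
    · haveI hfree : Module.Free ℂ (LinearMap.range (HK : L2S q →ₗ[ℂ] L2S m)) :=
        Module.Free.of_divisionRing _ _
      haveI : Module.Finite ℂ (LinearMap.range (HK : L2S q →ₗ[ℂ] L2S m)) :=
        Module.rank_lt_aleph0_iff.mp hfinK
      have hcl : (LinearMap.range (HK : L2S q →ₗ[ℂ] L2S m)).topologicalClosure
          = LinearMap.range (HK : L2S q →ₗ[ℂ] L2S m) :=
        IsClosed.submodule_topologicalClosure_eq (Submodule.closed_of_finiteDimensional _)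
      have hsub : LinearMap.range (D : L2S m →ₗ[ℂ] L2S m)
          ≤ LinearMap.range (HK : L2S q →ₗ[ℂ] L2S m) := by
        refine le_trans ?_ (le_trans (my_orth_le_closure HK) hcl.le)
        rintro _ ⟨u, rfl⟩
        rw [Submodule.mem_orthogonal]
        intro y hy
        have hy0 : adjoint HK y = 0 := hy
        have hD0 : D y = 0 := (hker1 y hy0).2
        show ⟪y, D u⟫ = 0
        rw [← adjoint_inner_left, hsaD, hD0, inner_zero_left]
      exact Submodule.rank_mono hsub
    · exact le_trans hfin.le (not_lt.mp hfinK)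

end Main


/-- Theorem 3.2 (second part): for rational `G, K` with
`T_G T_G* - T_K T_K* ≥ 0` of finite rank, one has
`T_G T_G* - T_K T_K* = H_K H_K* - H_G H_G*`, `δ(G) ≤ δ(K)`, and
`δ(K) - δ(G) ≤ rank (T_G T_G* - T_K T_K*) ≤ δ(K)`. -/
theorem finite_rank_consequences
    {m p q : ℕ}
    (G : ℝ → Matrix (Fin m) (Fin p) ℂ) (K : ℝ → Matrix (Fin m) (Fin q) ℂ)
    (hG : MemHinf G) (hK : MemHinf K)
    (hGrat : IsRatl G) (hKrat : IsRatl K)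
    (TG : L2S p →L[ℂ] L2S m) (TK : L2S q →L[ℂ] L2S m)
    (hTG : IsToeplitz G TG) (hTK : IsToeplitz K TK)
    (HG : L2S p →L[ℂ] L2S m) (HK : L2S q →L[ℂ] L2S m)
    (hHG : IsHankel G HG) (hHK : IsHankel K HK)
    (hpos : OpNonneg (TG ∘L adjoint TG - TK ∘L adjoint TK))
    (hfin : opRank (TG ∘L adjoint TG - TK ∘L adjoint TK) < Cardinal.aleph0) :
    TG ∘L adjoint TG - TK ∘L adjoint TK = HK ∘L adjoint HK - HG ∘L adjoint HG ∧
      opRank HG ≤ opRank HK ∧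
      opRank HK ≤ opRank (TG ∘L adjoint TG - TK ∘L adjoint TK) + opRank HG ∧
      opRank (TG ∘L adjoint TG - TK ∘L adjoint TK) ≤ opRank HK :=
  finite_rank_consequences' G K TG TK hTG hTK HG HK hHG hHK hpos hfin
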